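/- arXiv:1211.0047 — 4 statements merged into one kernel-verified Lean document; each statement's English description precedes it below -/
import Mathlib

section
/- Let (T,Σ,μ) be a measure space, {F_n : n ≥ 1} a sequence of nonempty closed-valued lower measurable correspondences T ⇉ ℝ^ℓ such that at least one F_n is compact-valued and ⋂_n F_n(t) ≠ ∅ for all t. Then the intersection correspondence t ↦ ⋂_{n≥1} F_n(t) has a measurable selection. -/
/-!
Since closed balls of `ℝ^ℓ` are compact, a point of `⋂ₙ Fₙ(t)` lies in the open ball `B(c, r)`
iff for some rational `q < r` and every `m` there is a point `y` of a countable dense set, lying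
in the closed ball `B̄(c, q)`, such that every `Fₙ(t)` meets `B(y, 1/(m+1))`. This writes
`{t | ⋂ₙ Fₙ(t) ∩ B(c, r) ≠ ∅}` as a countable combination of measurable sets (Himmelberg).
A measurable selection of the closed-valued intersection is then the pointwise limit of
measurable maps `gₖ` with values in a dense sequence, chosen so that `gₖ(t)` is `2⁻ᵏ`-close to
the intersection and `(2⁻ᵏ + 2¹⁻ᵏ)`-close to `gₖ₋₁(t)` (Kuratowski–Ryll-Nardzewski).
-/

open MeasureTheory Metric Filter Topology TopologicalSpace Set

section Metric

variable {E : Type*} [PseudoMetricSpace E]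

theorem mem_closure_of_tendsto_of_inter_ball_nonempty {ι : Type*} {l : Filter ι} [l.NeBot]
    {A : Set E} {u : ι → E} {ε : ι → ℝ} {a : E} (hu : Tendsto u l (𝓝 a))
    (hε : Tendsto ε l (𝓝 0)) (hA : ∀ᶠ i in l, (A ∩ ball (u i) (ε i)).Nonempty) :
    a ∈ closure A := by
  refine Metric.mem_closure_iff.2 fun δ hδ => ?_
  obtain ⟨i, hui, hεi, b, hbA, hb⟩ := ((hu.eventually (ball_mem_nhds a (half_pos hδ))).and
    ((hε.eventually (gt_mem_nhds (half_pos hδ))).and hA)).exists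
  refine ⟨b, hbA, ?_⟩
  rw [mem_ball'] at hb
  calc dist a b ≤ dist (u i) a + dist (u i) b := dist_triangle_left _ _ _
    _ < δ / 2 + δ / 2 := add_lt_add hui (hb.trans hεi)
    _ = δ := add_halves δ

theorem IsCompact.inter_iInter_nonempty_of_forall_exists_near {K : Set E} (hK : IsCompact K)
    {F : ℕ → Set E} (hF : ∀ n, IsClosed (F n))
    (h : ∀ m : ℕ, ∃ y ∈ K, ∀ n, (F n ∩ ball y (1 / (m + 1))).Nonempty) :
    (K ∩ ⋂ n, F n).Nonempty := by
  choose y hyK hyF using h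
  obtain ⟨a, haK, φ, hφ, hya⟩ := hK.tendsto_subseq hyK
  refine ⟨a, haK, mem_iInter.2 fun n => (hF n).closure_subset ?_⟩
  exact mem_closure_of_tendsto_of_inter_ball_nonempty hya
    (tendsto_one_div_add_atTop_nhds_zero_nat.comp hφ.tendsto_atTop)
    (Eventually.of_forall fun m => hyF (φ m) n)

theorem iInter_inter_ball_nonempty_iff [ProperSpace E] {S : Set E} (hS : Dense S)
    {F : ℕ → Set E} (hF : ∀ n, IsClosed (F n)) (c : E) (r : ℝ) :
    ((⋂ n, F n) ∩ ball c r).Nonempty ↔ ∃ q : ℚ, (q : ℝ) < r ∧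
      ∀ m : ℕ, ∃ y ∈ S ∩ closedBall c q, ∀ n, (F n ∩ ball y (1 / (m + 1))).Nonempty := by
  constructor
  · rintro ⟨a, haF, hac⟩
    obtain ⟨q, hq, hqr⟩ := exists_rat_btwn (mem_ball.1 hac)
    refine ⟨q, hqr, fun m => ?_⟩
    obtain ⟨y, hyS, hay⟩ := hS.exists_dist_lt a
      (lt_min (Nat.one_div_pos_of_nat (α := ℝ) (n := m)) (sub_pos.2 hq))
    refine ⟨y, ⟨hyS, ?_⟩, fun n => ⟨a, mem_iInter.1 haF n, ?_⟩⟩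
    · calc dist y c ≤ dist a y + dist a c := dist_triangle_left _ _ _
        _ ≤ (q - dist a c) + dist a c := by gcongr; exact hay.le.trans (min_le_right _ _)
        _ = q := sub_add_cancel _ _
    · exact mem_ball.2 (hay.trans_le (min_le_left _ _))
  · rintro ⟨q, hqr, h⟩
    obtain ⟨a, hac, haF⟩ :=
      (isCompact_closedBall c (q : ℝ)).inter_iInter_nonempty_of_forall_exists_near hF
        fun m => (h m).imp fun y ⟨⟨_, hyc⟩, hyF⟩ => ⟨hyc, hyF⟩
    exact ⟨a, haF, (mem_closedBall.1 hac).trans_lt hqr⟩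

theorem DenseRange.exists_inter_ball_nonempty_near {ι : Type*} {x : ι → E} (hx : DenseRange x)
    {A : Set E} {z : E} {r s : ℝ} (hA : (A ∩ ball z r).Nonempty) (hs : 0 < s) :
    ∃ i, (A ∩ ball (x i) s).Nonempty ∧ z ∈ ball (x i) (s + r) := by
  obtain ⟨a, haA, haz⟩ := hA
  obtain ⟨i, hi⟩ := hx.exists_dist_lt a hs
  refine ⟨i, ⟨a, haA, hi⟩, ?_⟩
  calc dist z (x i) ≤ dist a z + dist a (x i) := dist_triangle_left _ _ _
    _ < r + s := add_lt_add (mem_ball.1 haz) hi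
    _ = s + r := add_comm r s

end Metric

section Measurable

variable {T : Type*} [MeasurableSpace T]

theorem exists_measurable_forall_of_seq {E : Type*} [MeasurableSpace E] (x : ℕ → E)
    {p : T → E → Prop} (hp : ∀ i, MeasurableSet {t | p t (x i)}) (h : ∀ t, ∃ i, p t (x i)) :
    ∃ g : T → E, Measurable g ∧ ∀ t, p t (g t) := by
  classical
  exact ⟨fun t => x (Nat.find (h t)), measurable_from_top.comp (measurable_find h hp),
    fun t => Nat.find_spec (h t)⟩

theorem measurableSet_setOf_iInter_inter_ball_nonempty {E : Type*} [PseudoMetricSpace E]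
    [ProperSpace E] {F : ℕ → T → Set E} (hcl : ∀ n t, IsClosed (F n t))
    (hF : ∀ n c r, MeasurableSet {t | (F n t ∩ ball c r).Nonempty}) (c : E) (r : ℝ) :
    MeasurableSet {t | ((⋂ n, F n t) ∩ ball c r).Nonempty} := by
  obtain ⟨S, hSc, hSd⟩ := exists_countable_dense E
  have hset : {t | ((⋂ n, F n t) ∩ ball c r).Nonempty} = ⋃ (q : ℚ) (_ : (q : ℝ) < r),
      ⋂ m : ℕ, ⋃ y ∈ S ∩ closedBall c q, ⋂ n, {t | (F n t ∩ ball y (1 / (m + 1))).Nonempty} := by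
    ext t
    simp only [mem_ofPred_eq, iInter_inter_ball_nonempty_iff hSd (hcl · t), mem_iUnion,
      mem_iInter, exists_prop]
  rw [hset]
  exact .iUnion fun q => .iUnion fun _ => .iInter fun m =>
    .biUnion (hSc.mono inter_subset_left) fun y _ => .iInter fun n => hF n y _

variable {E : Type*} [PseudoMetricSpace E] [SeparableSpace E] [Nonempty E]
  [MeasurableSpace E] {G : T → Set E}

theorem exists_measurable_inter_ball_nonempty
    (hG : ∀ c r, MeasurableSet {t | (G t ∩ ball c r).Nonempty}) (hne : ∀ t, (G t).Nonempty)
    {s : ℝ} (hs : 0 < s) : ∃ g : T → E, Measurable g ∧ ∀ t, (G t ∩ ball (g t) s).Nonempty :=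
  exists_measurable_forall_of_seq (p := fun t y => (G t ∩ ball y s).Nonempty) (denseSeq E)
    (fun _ => hG _ _) fun t =>
    let ⟨a, ha⟩ := hne t
    ((denseRange_denseSeq E).exists_inter_ball_nonempty_near ⟨a, ha, mem_ball_self one_pos⟩
      hs).imp fun _ => And.left

theorem exists_measurable_inter_ball_nonempty_near [OpensMeasurableSpace E]
    (hG : ∀ c r, MeasurableSet {t | (G t ∩ ball c r).Nonempty}) {g : T → E} (hg : Measurable g)
    {r s : ℝ} (hgG : ∀ t, (G t ∩ ball (g t) r).Nonempty) (hs : 0 < s) :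
    ∃ g' : T → E, Measurable g' ∧ ∀ t, (G t ∩ ball (g' t) s).Nonempty ∧ g t ∈ ball (g' t) (s + r) :=
  exists_measurable_forall_of_seq
    (p := fun t y => (G t ∩ ball y s).Nonempty ∧ g t ∈ ball y (s + r)) (denseSeq E)
    (fun _ => (hG _ _).inter (hg measurableSet_ball)) fun t =>
    (denseRange_denseSeq E).exists_inter_ball_nonempty_near (hgG t) hs

theorem exists_measurable_selection [CompleteSpace E] [BorelSpace E]
    (hcl : ∀ t, IsClosed (G t)) (hne : ∀ t, (G t).Nonempty)
    (hG : ∀ c r, MeasurableSet {t | (G t ∩ ball c r).Nonempty}) :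
    ∃ f : T → E, Measurable f ∧ ∀ t, f t ∈ G t := by
  obtain ⟨g₀, hg₀, hg₀G⟩ := exists_measurable_inter_ball_nonempty hG hne one_pos
  have step (k : ℕ) (g : T → E) (hg : Measurable g)
      (hgG : ∀ t, (G t ∩ ball (g t) ((1 / 2) ^ k)).Nonempty) :
      ∃ g' : T → E, Measurable g' ∧ ∀ t, (G t ∩ ball (g' t) ((1 / 2) ^ (k + 1))).Nonempty ∧
        g t ∈ ball (g' t) ((1 / 2) ^ (k + 1) + (1 / 2) ^ k) :=
    exists_measurable_inter_ball_nonempty_near hG hg hgG (by positivity)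
  choose! next hnext_meas hnext using step
  let g : ℕ → T → E := fun k => Nat.rec g₀ next k
  have hg (k : ℕ) : Measurable (g k) ∧ ∀ t, (G t ∩ ball (g k t) ((1 / 2) ^ k)).Nonempty := by
    induction k with
    | zero => simpa using ⟨hg₀, hg₀G⟩
    | succ k ih => exact ⟨hnext_meas k _ ih.1 ih.2, fun t => (hnext k _ ih.1 ih.2 t).1⟩
  have hcauchy (t : T) : CauchySeq fun k => g k t := by
    refine cauchySeq_of_le_geometric (1 / 2) 2 (by norm_num) fun k => ?_
    calc dist (g k t) (g (k + 1) t) ≤ (1 / 2) ^ (k + 1) + (1 / 2) ^ k :=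
          (hnext k _ (hg k).1 (hg k).2 t).2.le
      _ ≤ 2 * (1 / 2) ^ k := by
          rw [pow_succ]; linarith [pow_nonneg (by norm_num : (0 : ℝ) ≤ 1 / 2) k]
  choose f hf using fun t => cauchySeq_tendsto_of_complete (hcauchy t)
  refine ⟨f, measurable_of_tendsto_metrizable (fun k => (hg k).1) (tendsto_pi_nhds.2 hf),
    fun t => (hcl t).closure_subset ?_⟩
  exact mem_closure_of_tendsto_of_inter_ball_nonempty (hf t)
    (tendsto_pow_atTop_nhds_zero_of_lt_one (by norm_num) (by norm_num))
    (Eventually.of_forall fun k => (hg k).2 t)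

end Measurable

theorem intersection_correspondence_measurable_selection_general {ℓ : ℕ} {T : Type*}
    [MeasurableSpace T] (F : ℕ → T → Set (Fin ℓ → ℝ))
    (hcl : ∀ n t, IsClosed (F n t))
    (hlm : ∀ n, ∀ V : Set (Fin ℓ → ℝ), IsOpen V →
      MeasurableSet {t | (F n t ∩ V).Nonempty})
    (hint : ∀ t, (⋂ n, F n t).Nonempty) :
    ∃ f : T → Fin ℓ → ℝ, Measurable f ∧ ∀ t, f t ∈ ⋂ n, F n t :=
  exists_measurable_selection (fun t => isClosed_iInter fun n => hcl n t) hint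
    (measurableSet_setOf_iInter_inter_ball_nonempty hcl fun n _ _ => hlm n _ isOpen_ball)

/-- Himmelberg intersection + Kuratowski–Ryll-Nardzewski: the intersection of a sequence
of nonempty closed-valued lower measurable correspondences, one of which is
compact-valued, has a measurable selection whenever the intersection is nonempty. -/
theorem intersection_correspondence_measurable_selection {ℓ : ℕ} {T : Type*}
    [MeasurableSpace T] (μ : Measure T) (F : ℕ → T → Set (Fin ℓ → ℝ))
    (hne : ∀ n t, (F n t).Nonempty) (hcl : ∀ n t, IsClosed (F n t))
    (hlm : ∀ n, ∀ V : Set (Fin ℓ → ℝ), IsOpen V →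
      MeasurableSet {t | (F n t ∩ V).Nonempty})
    (hcompact : ∃ n₀, ∀ t, IsCompact (F n₀ t))
    (hint : ∀ t, (⋂ n, F n t).Nonempty) :
    ∃ f : T → Fin ℓ → ℝ, Measurable f ∧ ∀ t, f t ∈ ⋂ n, F n t :=
  intersection_correspondence_measurable_selection_general F hcl hlm hint
end

section
/- Let U : ℝ^ℓ₊ → ℝ be continuous and let p_n → p in Δ, a ∈ ℝ^ℓ₊. Define the preferred set C(q) = {y ∈ X(q) : U(y) ≥ U(x) for all x ∈ B(q)}, where B(q) = {x ∈ ℝ^ℓ₊ : ⟨q,x⟩ ≤ ⟨q,a⟩} and X(q) = {x ∈ ℝ^ℓ₊ : x ≤ b(q)} with b(q) the vector all of whose coordinates equal (1/min_h q^h)∑_h a^h. Then every cluster point of any sequence x_n ∈ C(p_n) belongs to C(p); that is, Ls C(p_n) ⊆ C(p). -/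
open Filter

/-- Upper semicontinuity of the truncated preferred correspondence in the price:
every cluster point of points of `C (p n)` along `p n → q` lies in `C q`. -/
theorem preferred_Ls_subset {ℓ : ℕ} (hℓ : 0 < ℓ) (U : (Fin ℓ → ℝ) → ℝ)
    (hU : Continuous U) (a : Fin ℓ → ℝ) (ha : ∀ i, 0 ≤ a i)
    (p : ℕ → Fin ℓ → ℝ) (q : Fin ℓ → ℝ)
    (hpΔ : ∀ n, (∀ i, 0 < p n i) ∧ ∑ i, p n i = 1)
    (hqΔ : (∀ i, 0 < q i) ∧ ∑ i, q i = 1)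
    (hconv : Tendsto p atTop (nhds q))
    (B X C : (Fin ℓ → ℝ) → Set (Fin ℓ → ℝ))
    (hB : ∀ r, B r = {x | (∀ i, 0 ≤ x i) ∧ ∑ i, r i * x i ≤ ∑ i, r i * a i})
    (hX : ∀ r, X r = {x | (∀ i, 0 ≤ x i) ∧ ∀ i, x i ≤ (1 / ⨅ h, r h) * ∑ h, a h})
    (hC : ∀ r, C r = {y ∈ X r | ∀ x ∈ B r, U y ≥ U x})
    (x : Fin ℓ → ℝ)
    (hx : ∃ φ : ℕ → ℕ, StrictMono φ ∧ ∃ xk : ℕ → Fin ℓ → ℝ,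
      (∀ k, xk k ∈ C (p (φ k))) ∧ Tendsto xk atTop (nhds x)) :
    x ∈ C q := by
  haveI : Nonempty (Fin ℓ) := ⟨⟨0, hℓ⟩⟩
  obtain ⟨φ, hφ, xk, hmem, hlim⟩ := hx
  -- coordinatewise convergence of the subsequence of prices
  have hp : Tendsto (fun k => p (φ k)) atTop (nhds q) :=
    hconv.comp hφ.tendsto_atTop
  have hpi : ∀ i, Tendsto (fun k => p (φ k) i) atTop (nhds (q i)) := by
    intro i; exact (tendsto_pi_nhds.mp hp) i
  have hxi : ∀ i, Tendsto (fun k => xk k i) atTop (nhds (x i)) := by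
    intro i; exact (tendsto_pi_nhds.mp hlim) i
  -- membership facts from hmem
  have hXk : ∀ k, (∀ i, 0 ≤ xk k i) ∧
      ∀ i, xk k i ≤ (1 / ⨅ h, p (φ k) h) * ∑ h, a h := by
    intro k
    have := hmem k
    rw [hC, Set.mem_setOf_eq, hX] at this
    exact this.1
  have hUk : ∀ k, ∀ z ∈ B (p (φ k)), U (xk k) ≥ U z := by
    intro k
    have := hmem k
    rw [hC, Set.mem_setOf_eq] at this
    exact this.2
  -- convergence of the infimum of prices
  have hinf : Tendsto (fun k => ⨅ h, p (φ k) h) atTop (nhds (⨅ h, q h)) := by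
    have := Filter.Tendsto.finset_inf'_nhds_apply (s := (Finset.univ : Finset (Fin ℓ)))
      (f := fun i k => p (φ k) i) (g := q) (l := atTop)
      Finset.univ_nonempty (fun i _ => hpi i)
    simpa only [Finset.inf'_univ_eq_ciInf] using this
  have hqinfpos : 0 < ⨅ h, q h := by
    have : ∀ h ∈ (Finset.univ : Finset (Fin ℓ)), 0 < q h := fun h _ => hqΔ.1 h
    have := Finset.lt_inf'_iff (Finset.univ_nonempty) (f := q) (a := (0:ℝ)) |>.mpr this
    simpa only [Finset.inf'_univ_eq_ciInf] using this
  -- convergence of the bound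
  have hbnd : Tendsto (fun k => (1 / ⨅ h, p (φ k) h) * ∑ h, a h) atTop
      (nhds ((1 / ⨅ h, q h) * ∑ h, a h)) :=
    ((tendsto_const_nhds.div hinf hqinfpos.ne').mul tendsto_const_nhds)
  have hx0 : ∀ i, 0 ≤ x i := fun i =>
    ge_of_tendsto' (hxi i) (fun k => (hXk k).1 i)
  rw [hC, Set.mem_setOf_eq, hX]
  refine ⟨⟨hx0, fun i => ?_⟩, ?_⟩
  · exact le_of_tendsto_of_tendsto' (hxi i) hbnd (fun k => (hXk k).2 i)
  · -- preference maximality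
    intro z hz
    rw [hB] at hz
    obtain ⟨hz0, hzb⟩ := hz
    have hUx : Tendsto (fun k => U (xk k)) atTop (nhds (U x)) :=
      (hU.tendsto x).comp hlim
    by_cases hz' : z = 0
    · subst hz'
      have h0 : ∀ k, U (xk k) ≥ U 0 := by
        intro k
        apply hUk k
        rw [hB]
        refine ⟨fun i => le_refl 0, ?_⟩
        simp only [Pi.zero_apply, mul_zero, Finset.sum_const_zero]
        exact Finset.sum_nonneg fun i _ => mul_nonneg ((hpΔ (φ k)).1 i).le (ha i)
      exact ge_of_tendsto' hUx h0
    · -- z ≠ 0, so ∑ q i * z i > 0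
      have hzpos : 0 < ∑ i, q i * z i := by
        obtain ⟨i, hi⟩ : ∃ i, 0 < z i := by
          by_contra h
          push_neg at h
          exact hz' (funext fun i => le_antisymm (h i) (hz0 i))
        exact Finset.sum_pos' (fun j _ => mul_nonneg (hqΔ.1 j).le (hz0 j))
          ⟨i, Finset.mem_univ i, mul_pos (hqΔ.1 i) hi⟩
      set t : ℕ → ℝ := fun k =>
        min 1 ((∑ i, p (φ k) i * a i) / (∑ i, p (φ k) i * z i)) with ht
      have hDk : ∀ k, 0 < ∑ i, p (φ k) i * z i := by
        intro k
        obtain ⟨i, hi⟩ : ∃ i, 0 < z i := by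
          by_contra h
          push_neg at h
          exact hz' (funext fun i => le_antisymm (h i) (hz0 i))
        exact Finset.sum_pos' (fun j _ => mul_nonneg ((hpΔ (φ k)).1 j).le (hz0 j))
          ⟨i, Finset.mem_univ i, mul_pos ((hpΔ (φ k)).1 i) hi⟩
      have htnonneg : ∀ k, 0 ≤ t k := by
        intro k
        exact le_min zero_le_one (div_nonneg
          (Finset.sum_nonneg fun i _ => mul_nonneg ((hpΔ (φ k)).1 i).le (ha i))
          (hDk k).le)
      have hmemB : ∀ k, (fun i => t k * z i) ∈ B (p (φ k)) := by
        intro k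
        rw [hB]
        refine ⟨fun i => mul_nonneg (htnonneg k) (hz0 i), ?_⟩
        have : ∑ i, p (φ k) i * (t k * z i) = t k * ∑ i, p (φ k) i * z i := by
          rw [Finset.mul_sum]; congr 1; ext i; ring
        rw [this]
        have h1 : t k ≤ (∑ i, p (φ k) i * a i) / (∑ i, p (φ k) i * z i) :=
          min_le_right _ _
        calc t k * ∑ i, p (φ k) i * z i
            ≤ ((∑ i, p (φ k) i * a i) / (∑ i, p (φ k) i * z i)) *
              ∑ i, p (φ k) i * z i := by
              exact mul_le_mul_of_nonneg_right h1 (hDk k).le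
          _ = ∑ i, p (φ k) i * a i := div_mul_cancel₀ _ (hDk k).ne'
      -- t k → 1
      have hsumA : Tendsto (fun k => ∑ i, p (φ k) i * a i) atTop
          (nhds (∑ i, q i * a i)) :=
        tendsto_finset_sum _ fun i _ => (hpi i).mul tendsto_const_nhds
      have hsumD : Tendsto (fun k => ∑ i, p (φ k) i * z i) atTop
          (nhds (∑ i, q i * z i)) :=
        tendsto_finset_sum _ fun i _ => (hpi i).mul tendsto_const_nhds
      have htlim : Tendsto t atTop (nhds 1) := by
        have : Tendsto t atTop
            (nhds (min 1 ((∑ i, q i * a i) / (∑ i, q i * z i)))) :=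
          tendsto_const_nhds.min (hsumA.div hsumD hzpos.ne')
        have hmin : min 1 ((∑ i, q i * a i) / (∑ i, q i * z i)) = 1 :=
          min_eq_left ((one_le_div hzpos).mpr hzb)
        rwa [hmin] at this
      have hzklim : Tendsto (fun k => (fun i => t k * z i)) atTop (nhds z) := by
        rw [tendsto_pi_nhds]
        intro i
        have := htlim.mul (tendsto_const_nhds (x := z i))
        simpa using this
      have hUz : Tendsto (fun k => U (fun i => t k * z i)) atTop (nhds (U z)) :=
        (hU.tendsto z).comp hzklim
      exact le_of_tendsto_of_tendsto' hUz hUx (fun k => hUk k _ (hmemB k))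
end

section
/- Let U : ℝ^ℓ₊ → ℝ be continuous and monotone (U(x+y) > U(x) whenever y ≥ 0, y ≠ 0), let p_n → p in Δ and a ∈ ℝ^ℓ₊. With B, X, C defined as the budget set, truncation box, and preferred-in-box set at each price, every point d ∈ C(p) is a Kuratowski lower limit point of the sequence {C(p_n)}: C(p) ⊆ Li C(p_n). -/
/-!
If `d` is the corner `b(q)` of the box, take the corners `b(pₙ)`: by monotonicity the corner of
`X(r)` lies in `C(r)`, since every point of `B(r)` is below it. Otherwise `d` is a limit of points
of `X(q)` strictly preferred to all of `B(q)` (raise `d` by `ε` and truncate at `b(q)`). Such a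
point lies in `Li C(pₙ)`: its truncations at `b(pₙ)` converge to it, and they stay strictly
preferred to all of `B(pₙ)`, because the budget correspondence has closed graph and, near `q`,
values inside a fixed compact box. Since a Kuratowski lower limit is closed, `d` lies in it too.
-/

open Filter Topology Metric Set Finset

/-- The Kuratowski lower limit `Li A n`. -/
def lowerLimit {α : Type*} [TopologicalSpace α] (A : ℕ → Set α) : Set α :=
  {d | ∃ x : ℕ → α, (∀ᶠ n in atTop, x n ∈ A n) ∧ Tendsto x atTop (𝓝 d)}

section LowerLimit

variable {α : Type*} [PseudoMetricSpace α] {A : ℕ → Set α} {d : α}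

theorem mem_lowerLimit_of_eventually_exists_dist_lt
    (h : ∀ ε > 0, ∀ᶠ n in atTop, ∃ y ∈ A n, dist y d < ε) : d ∈ lowerLimit A := by
  have hne : ∀ᶠ n in atTop, (A n).Nonempty :=
    (h 1 one_pos).mono fun n ⟨y, hy, _⟩ => ⟨y, hy⟩
  have hinfDist : Tendsto (fun n => infDist d (A n)) atTop (𝓝 0) :=
    tendsto_order.2 ⟨fun _ hb => Eventually.of_forall fun _ => hb.trans_le infDist_nonneg,
      fun ε hε => (h ε hε).mono fun _ ⟨y, hy, hyd⟩ =>
        (infDist_le_dist_of_mem hy).trans_lt (by rwa [dist_comm])⟩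
  have hchoose : ∀ n, (A n).Nonempty →
      ∃ y ∈ A n, dist y d < infDist d (A n) + 1 / (n + 1) := by
    intro n hn
    obtain ⟨y, hy, hyd⟩ := (infDist_lt_iff hn).1 (lt_add_of_pos_right _ Nat.one_div_pos_of_nat)
    exact ⟨y, hy, by rwa [dist_comm]⟩
  have : Nonempty α := ⟨d⟩
  choose! x hxA hxd using hchoose
  refine ⟨x, hne.mono hxA, tendsto_iff_dist_tendsto_zero.2 ?_⟩
  refine squeeze_zero' (Eventually.of_forall fun _ => dist_nonneg)
    (hne.mono fun n hn => (hxd n hn).le) ?_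
  simpa using hinfDist.add tendsto_one_div_add_atTop_nhds_zero_nat

theorem isClosed_lowerLimit (A : ℕ → Set α) : IsClosed (lowerLimit A) := by
  refine isClosed_of_closure_subset fun d hd =>
    mem_lowerLimit_of_eventually_exists_dist_lt fun ε hε => ?_
  obtain ⟨d', ⟨x, hxA, hx⟩, hdd'⟩ := Metric.mem_closure_iff.1 hd (ε / 2) (half_pos hε)
  filter_upwards [hxA, hx.eventually (ball_mem_nhds d' (half_pos hε))] with n hn hxn
  exact ⟨x n, hn, by linarith [dist_triangle (x n) d' d, dist_comm d d', mem_ball.1 hxn]⟩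

end LowerLimit

section Consumer

variable {ι : Type*} {U : (ι → ℝ) → ℝ}

theorem strictMonoOn_Ici_of_lt_add
    (hmono : ∀ x y : ι → ℝ, (∀ i, 0 ≤ x i) → (∀ i, 0 ≤ y i) → y ≠ 0 → U (x + y) > U x) :
    StrictMonoOn U (Ici 0) := fun x hx y _ hxy => by
  simpa using hmono x (y - x) hx (fun i => sub_nonneg.2 (hxy.le i)) (sub_ne_zero.2 hxy.ne')

variable [Fintype ι]

noncomputable section

def budgetSet (a r : ι → ℝ) : Set (ι → ℝ) :=
  {x | (∀ i, 0 ≤ x i) ∧ ∑ i, r i * x i ≤ ∑ i, r i * a i}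

/-- The common coordinate of the constant vector `b(r)`. -/
def boxBound (a r : ι → ℝ) : ℝ := (1 / ⨅ h, r h) * ∑ h, a h

def truncBox (a r : ι → ℝ) : Set (ι → ℝ) :=
  {x | (∀ i, 0 ≤ x i) ∧ ∀ i, x i ≤ boxBound a r}

def preferredSet (U : (ι → ℝ) → ℝ) (a r : ι → ℝ) : Set (ι → ℝ) :=
  {y ∈ truncBox a r | ∀ x ∈ budgetSet a r, U y ≥ U x}

def strictlyPreferredSet (U : (ι → ℝ) → ℝ) (a r : ι → ℝ) : Set (ι → ℝ) :=
  {y ∈ truncBox a r | ∀ x ∈ budgetSet a r, U x < U y}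

end

variable {a q r x y : ι → ℝ}

theorem isClosed_budgetGraph (a : ι → ℝ) :
    IsClosed {z : (ι → ℝ) × (ι → ℝ) | z.2 ∈ budgetSet a z.1} :=
  (isClosed_le continuous_const continuous_snd).inter (isClosed_le
    (by fun_prop : Continuous fun z : (ι → ℝ) × (ι → ℝ) => ∑ i, z.1 i * z.2 i)
    (by fun_prop : Continuous fun z : (ι → ℝ) × (ι → ℝ) => ∑ i, z.1 i * a i))

theorem mul_le_of_mem_budgetSet (hr : ∀ i, 0 ≤ r i) (hx : x ∈ budgetSet a r) (i : ι) :
    r i * x i ≤ ∑ j, r j * a j :=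
  (single_le_sum (fun j _ => mul_nonneg (hr j) (hx.1 j)) (mem_univ i)).trans hx.2

theorem eventually_budgetSet_subset_Icc (a : ι → ℝ) (hq : ∀ i, 0 < q i) :
    ∀ᶠ r in 𝓝 q, budgetSet a r ⊆ Icc 0 fun i => 2 * (∑ j, q j * a j + 1) / q i := by
  have hprice : ∀ᶠ r in 𝓝 q, ∀ i, q i / 2 < r i := eventually_all.2 fun i =>
    (continuous_apply i).continuousAt.eventually (lt_mem_nhds (half_lt_self (hq i)))
  have hwealth : ∀ᶠ r in 𝓝 q, ∑ j, r j * a j < ∑ j, q j * a j + 1 :=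
    (by fun_prop : Continuous fun r : ι → ℝ => ∑ j, r j * a j).continuousAt.eventually
      (gt_mem_nhds (lt_add_one _))
  filter_upwards [hprice, hwealth] with r hr hra x hx
  refine ⟨hx.1, fun i => ?_⟩
  rw [le_div_iff₀ (hq i)]
  have := mul_le_of_mem_budgetSet (fun j => (half_pos (hq j)).le.trans (hr j).le) hx i
  nlinarith [hx.1 i, hr i]

theorem eventually_forall_mem_budgetSet_lt (hU : Continuous U) (hq : ∀ i, 0 < q i)
    (hy : ∀ x ∈ budgetSet a q, U x < U y) :
    ∀ᶠ z in 𝓝 (q, y), ∀ x ∈ budgetSet a z.1, U x < U z.2 := by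
  have hopen : IsOpen ({w : ((ι → ℝ) × (ι → ℝ)) × (ι → ℝ) | w.2 ∉ budgetSet a w.1.1} ∪
      {w | U w.2 < U w.1.2}) :=
    ((isClosed_budgetGraph a).isOpen_compl.preimage
        (continuous_fst.fst.prodMk continuous_snd)).union
      (isOpen_lt (hU.comp continuous_snd) (hU.comp continuous_fst.snd))
  have hK : ∀ᶠ z in 𝓝 (q, y), ∀ x ∈ Icc (0 : ι → ℝ) (fun i => 2 * (∑ j, q j * a j + 1) / q i),
      x ∈ budgetSet a z.1 → U x < U z.2 :=
    isCompact_Icc.eventually_forall_of_forall_eventually fun x _ =>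
      mem_of_superset (hopen.mem_nhds (x := ((q, y), x))
        ((em (x ∈ budgetSet a q)).imp_left (hy x)).symm)
        fun w hw hwB => hw.resolve_left (not_not.2 hwB)
  filter_upwards [hK, continuous_fst.continuousAt.eventually
    (eventually_budgetSet_subset_Icc a hq)] with z hzK hzB x hx using hzK x (hzB hx) hx

theorem continuousAt_boxBound (a : ι → ℝ) (hq : ∀ i, 0 < q i) :
    ContinuousAt (boxBound a) q := by
  cases isEmpty_or_nonempty ι
  · have : boxBound a = fun _ => 0 := funext fun r => by simp [boxBound]
    exact this ▸ continuousAt_const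
  · have hinf : Continuous fun r : ι → ℝ => ⨅ h, r h := by
      simp only [← Finset.inf'_univ_eq_ciInf]
      exact Continuous.finset_inf'_apply univ_nonempty fun i _ => continuous_apply i
    obtain ⟨i, hi⟩ := exists_eq_ciInf_of_finite (f := q)
    exact (continuousAt_const.div hinf.continuousAt (hi ▸ (hq i).ne')).mul continuousAt_const

theorem boxBound_nonneg (ha : ∀ i, 0 ≤ a i) (hr : ∀ i, 0 ≤ r i) : 0 ≤ boxBound a r :=
  mul_nonneg (one_div_nonneg.2 (Real.iInf_nonneg hr)) (sum_nonneg fun i _ => ha i)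

theorem le_boxBound_of_mem_budgetSet (ha : ∀ i, 0 ≤ a i) (hr : ∀ i, 0 < r i)
    (hr1 : ∑ i, r i = 1) (hx : x ∈ budgetSet a r) (i : ι) : x i ≤ boxBound a r := by
  have : Nonempty ι := ⟨i⟩
  obtain ⟨k, hk⟩ := exists_eq_ciInf_of_finite (f := r)
  have hle_one : ∀ j, r j ≤ 1 := fun j =>
    hr1 ▸ single_le_sum (fun j _ => (hr j).le) (mem_univ j)
  rw [boxBound, ← hk, one_div_mul_eq_div, le_div_iff₀ (hr k)]
  calc x i * r k ≤ r i * x i :=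
        mul_comm (r i) (x i) ▸ mul_le_mul_of_nonneg_left
          (hk ▸ ciInf_le (Finite.bddBelow_range r) i) (hx.1 i)
    _ ≤ ∑ j, r j * a j := mul_le_of_mem_budgetSet (fun j => (hr j).le) hx i
    _ ≤ ∑ j, a j := sum_le_sum fun j _ => mul_le_of_le_one_left (ha j) (hle_one j)

theorem corner_mem_preferredSet
    (hmono : ∀ x y : ι → ℝ, (∀ i, 0 ≤ x i) → (∀ i, 0 ≤ y i) → y ≠ 0 → U (x + y) > U x)
    (ha : ∀ i, 0 ≤ a i) (hr : ∀ i, 0 < r i) (hr1 : ∑ i, r i = 1) :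
    (fun _ => boxBound a r) ∈ preferredSet U a r := by
  have hbound : 0 ≤ boxBound a r := boxBound_nonneg ha fun i => (hr i).le
  refine ⟨⟨fun _ => hbound, fun _ => le_rfl⟩, fun x hx => ?_⟩
  exact (strictMonoOn_Ici_of_lt_add hmono).monotoneOn hx.1 (fun _ => hbound)
    fun i => le_boxBound_of_mem_budgetSet ha hr hr1 hx i

theorem mem_closure_strictlyPreferredSet
    (hmono : ∀ x y : ι → ℝ, (∀ i, 0 ≤ x i) → (∀ i, 0 ≤ y i) → y ≠ 0 → U (x + y) > U x)
    {d : ι → ℝ} {j : ι} (hd : d ∈ preferredSet U a q) (hj : d j < boxBound a q) :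
    d ∈ closure (strictlyPreferredSet U a q) := by
  obtain ⟨⟨hd0, hdt⟩, hdpref⟩ := hd
  have hlim : Tendsto (fun ε : ℝ => fun i => min (d i + ε) (boxBound a q)) (𝓝[>] 0) (𝓝 d) := by
    have hcont : Continuous fun ε : ℝ => fun i => min (d i + ε) (boxBound a q) := by fun_prop
    simpa [hdt] using hcont.continuousAt.tendsto.mono_left (nhdsWithin_le_nhds (a := 0))
  refine mem_closure_of_tendsto hlim (eventually_nhdsWithin_of_forall fun ε hε => ?_)
  have hlt : d < fun i => min (d i + ε) (boxBound a q) :=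
    Pi.lt_def.2 ⟨fun i => le_min (by linarith [mem_Ioi.1 hε]) (hdt i),
      j, lt_min (by linarith [mem_Ioi.1 hε]) hj⟩
  refine ⟨⟨fun i => (hd0 i).trans (hlt.le i), fun i => min_le_right _ _⟩, fun x hx => ?_⟩
  exact (hdpref x hx).trans_lt
    (strictMonoOn_Ici_of_lt_add hmono hd0 (fun i => (hd0 i).trans (hlt.le i)) hlt)

theorem strictlyPreferredSet_subset_lowerLimit {p : ℕ → ι → ℝ} (hU : Continuous U)
    (ha : ∀ i, 0 ≤ a i) (hp : ∀ n i, 0 < p n i) (hq : ∀ i, 0 < q i)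
    (hconv : Tendsto p atTop (𝓝 q)) :
    strictlyPreferredSet U a q ⊆ lowerLimit fun n => preferredSet U a (p n) := by
  rintro y ⟨hy, hstrict⟩
  set yn : ℕ → ι → ℝ := fun n i => min (y i) (boxBound a (p n))
  have hyn : Tendsto yn atTop (𝓝 y) := tendsto_pi_nhds.2 fun i => by
    have := (tendsto_const_nhds (x := y i)).min ((continuousAt_boxBound a hq).tendsto.comp hconv)
    rwa [min_eq_left (hy.2 i)] at this
  refine ⟨yn, ?_, hyn⟩
  filter_upwards [(hconv.prodMk_nhds hyn).eventually
    (eventually_forall_mem_budgetSet_lt hU hq hstrict)] with n hn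
  exact ⟨⟨fun i => le_min (hy.1 i) (boxBound_nonneg ha fun i => (hp n i).le),
    fun i => min_le_right _ _⟩, fun x hx => (hn x hx).le⟩

end Consumer

theorem preferred_subset_Li_general {ℓ : ℕ} (U : (Fin ℓ → ℝ) → ℝ)
    (hU : Continuous U)
    (hmono : ∀ x y : Fin ℓ → ℝ, (∀ i, 0 ≤ x i) → (∀ i, 0 ≤ y i) → y ≠ 0 →
      U (x + y) > U x)
    (a : Fin ℓ → ℝ) (ha : ∀ i, 0 ≤ a i)
    (p : ℕ → Fin ℓ → ℝ) (q : Fin ℓ → ℝ)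
    (hpΔ : ∀ n, (∀ i, 0 < p n i) ∧ ∑ i, p n i = 1)
    (hqΔ : (∀ i, 0 < q i) ∧ ∑ i, q i = 1)
    (hconv : Tendsto p atTop (nhds q))
    (B X C : (Fin ℓ → ℝ) → Set (Fin ℓ → ℝ))
    (hB : ∀ r, B r = {x | (∀ i, 0 ≤ x i) ∧ ∑ i, r i * x i ≤ ∑ i, r i * a i})
    (hX : ∀ r, X r = {x | (∀ i, 0 ≤ x i) ∧ ∀ i, x i ≤ (1 / ⨅ h, r h) * ∑ h, a h})
    (hC : ∀ r, C r = {y ∈ X r | ∀ x ∈ B r, U y ≥ U x}) :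
    ∀ d ∈ C q, ∃ x : ℕ → Fin ℓ → ℝ,
      (∀ᶠ n in atTop, x n ∈ C (p n)) ∧ Tendsto x atTop (nhds d) := by
  obtain rfl : B = budgetSet a := funext hB
  obtain rfl : X = truncBox a := funext hX
  obtain rfl : C = preferredSet U a := funext hC
  intro d hd
  change d ∈ lowerLimit fun n => preferredSet U a (p n)
  by_cases hcorner : ∀ i, d i = boxBound a q
  · obtain rfl : d = fun _ => boxBound a q := funext hcorner
    exact ⟨fun n _ => boxBound a (p n),
      Eventually.of_forall fun n => corner_mem_preferredSet hmono ha (hpΔ n).1 (hpΔ n).2,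
      tendsto_pi_nhds.2 fun _ => (continuousAt_boxBound a hqΔ.1).tendsto.comp hconv⟩
  · obtain ⟨j, hj⟩ := not_forall.1 hcorner
    exact (isClosed_lowerLimit _).closure_subset_iff.2
      (strictlyPreferredSet_subset_lowerLimit hU ha (fun n => (hpΔ n).1) hqΔ.1 hconv)
      (mem_closure_strictlyPreferredSet hmono hd ((hd.1.2 j).lt_of_ne hj))

/-- Lower semicontinuity of the truncated preferred correspondence in the price:
every point of `C q` is a Kuratowski lower limit point of the sets `C (p n)`. -/
theorem preferred_subset_Li {ℓ : ℕ} (hℓ : 0 < ℓ) (U : (Fin ℓ → ℝ) → ℝ)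
    (hU : Continuous U)
    (hmono : ∀ x y : Fin ℓ → ℝ, (∀ i, 0 ≤ x i) → (∀ i, 0 ≤ y i) → y ≠ 0 →
      U (x + y) > U x)
    (a : Fin ℓ → ℝ) (ha : ∀ i, 0 ≤ a i)
    (p : ℕ → Fin ℓ → ℝ) (q : Fin ℓ → ℝ)
    (hpΔ : ∀ n, (∀ i, 0 < p n i) ∧ ∑ i, p n i = 1)
    (hqΔ : (∀ i, 0 < q i) ∧ ∑ i, q i = 1)
    (hconv : Tendsto p atTop (nhds q))
    (B X C : (Fin ℓ → ℝ) → Set (Fin ℓ → ℝ))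
    (hB : ∀ r, B r = {x | (∀ i, 0 ≤ x i) ∧ ∑ i, r i * x i ≤ ∑ i, r i * a i})
    (hX : ∀ r, X r = {x | (∀ i, 0 ≤ x i) ∧ ∀ i, x i ≤ (1 / ⨅ h, r h) * ∑ h, a h})
    (hC : ∀ r, C r = {y ∈ X r | ∀ x ∈ B r, U y ≥ U x}) :
    ∀ d ∈ C q, ∃ x : ℕ → Fin ℓ → ℝ,
      (∀ᶠ n in atTop, x n ∈ C (p n)) ∧ Tendsto x atTop (nhds d) :=
  preferred_subset_Li_general U hU hmono a ha p q hpΔ hqΔ hconv B X C hB hX hC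
end

section
/- Let (T,Σ,μ) be a complete finite measure space with μ(T) > 0, B ⊆ ℝ^ℓ a Borel subset, and F : T ⇉ B a nonempty-valued correspondence whose graph {(t,x) : x ∈ F(t)} belongs to Σ ⊗ 𝔅(B). Then there exists a measurable function f : T → B with f(t) ∈ F(t) for all t ∈ T. -/
/-!
The graph is the preimage of a Borel set `S₀ ⊆ ℕ^ℕ × X` under `(t, x) ↦ (h t, x)` for some
measurable `h : T → ℕ^ℕ`, since a set of the product σ-algebra involves only countably many
measurable subsets of `T`. Being Borel in a Polish space, `S₀` is the range of a continuous
`ψ : ℕ^ℕ → ℕ^ℕ × X`, and `t ↦ (ψ (σ t)).2` is a selection when `σ t` is the lexicographically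
least `z` with `(ψ z).1 = h t`. The coordinates of `σ t` are determined by the sets
`{t | h t ∈ (ψ ·).1 '' cylinder}`, preimages of analytic sets. These are measurable because `μ`
is complete and analytic sets are universally measurable: by Lusin's capacity argument, the
measure of the range of a continuous `φ` on `ℕ^ℕ` is approached from inside by the compact sets
`φ '' Iic n`.
-/

open MeasureTheory Set Filter Topology Function
open scoped ENNReal

noncomputable def greedySeq (P : ℕ → (ℕ → ℕ) → ℕ → Prop) (m : ℕ) : ℕ :=
  sInf {k | P m (fun i => if i < m then greedySeq P i else 0) k}

theorem greedySeq_spec {P : ℕ → (ℕ → ℕ) → ℕ → Prop}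
    (hP : ∀ m x y, (∀ i < m, x i = y i) → P m x = P m y) {m : ℕ}
    (h : ∃ k, P m (greedySeq P) k) : P m (greedySeq P) (greedySeq P m) := by
  rw [greedySeq, hP m _ (greedySeq P) fun i hi => if_pos hi]
  exact Nat.sInf_mem h

theorem forall_lt_succ_update_eq {x y : ℕ → ℕ} {m : ℕ} (h : ∀ i < m, x i = y i) (k : ℕ) :
    ∀ i < m + 1, update x m k i = update y m k i := by
  intro i hi
  rcases Nat.lt_succ_iff_lt_or_eq.1 hi with hi | rfl
  · simp [update, hi.ne, h i hi]
  · simp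

theorem measurable_nat_sInf {T : Type*} [MeasurableSpace T] {P : T → ℕ → Prop}
    (hP : ∀ k, MeasurableSet {t | P t k}) : Measurable fun t => sInf {k | P t k} := by
  classical
  have hsInf : ∀ t j, sInf {k | P t k} = j ↔
      (P t j ∧ ∀ i < j, ¬ P t i) ∨ (j = 0 ∧ ∀ k, ¬ P t k) := by
    intro t j
    by_cases h : ∃ k, P t k
    · rw [Nat.sInf_def (s := {k | P t k}) h, Nat.find_eq_iff]
      simp [h]
    · push Not at h
      simp [h, eq_comm]
  refine measurable_to_countable' fun j => ?_
  simp only [preimage, mem_singleton_iff, hsInf, ofPred_or, ofPred_and, ofPred_forall]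
  exact ((hP j).inter (.iInter fun i => .iInter fun _ => (hP i).compl)).union
    ((MeasurableSet.const _).inter (.iInter fun k => (hP k).compl))

theorem measurable_greedySeq {T : Type*} [MeasurableSpace T] {P : T → ℕ → (ℕ → ℕ) → ℕ → Prop}
    (hP : ∀ m x k, MeasurableSet {t | P t m x k}) :
    Measurable fun t => greedySeq (P t) := by
  refine measurable_pi_lambda _ fun m => ?_
  induction m using Nat.strong_induction_on with
  | _ m ih =>
  have hprefix : Measurable fun t (i : Fin m) => greedySeq (P t) i :=
    measurable_pi_lambda _ fun i => ih i i.2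
  -- the `m`-th term only sees the first `m` terms, which range over the countable `Fin m → ℕ`
  have hstep : Measurable fun q : T × (Fin m → ℕ) =>
      sInf {k | P q.1 m (fun i => if h : i < m then q.2 ⟨i, h⟩ else 0) k} :=
    measurable_from_prod_countable_left fun s =>
      measurable_nat_sInf fun k => hP m (fun i => if h : i < m then s ⟨i, h⟩ else 0) k
  convert hstep.comp (measurable_id.prodMk hprefix) using 2 with t
  rw [greedySeq]
  simp [dite_eq_ite]

theorem MeasurableSet.exists_eq_prodMap_preimage {T X : Type*} [MeasurableSpace T]
    [MeasurableSpace X] {S : Set (T × X)} (hS : MeasurableSet S) :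
    ∃ (h : T → ℕ → ℕ) (S₀ : Set ((ℕ → ℕ) × X)), Measurable h ∧ MeasurableSet S₀ ∧
      S = Prod.map h id ⁻¹' S₀ := by
  rw [← generateFrom_prod] at hS
  induction S, hS using MeasurableSpace.generateFrom_induction with
  | hC _ hS =>
    classical
    obtain ⟨A, hA, B, hB, rfl⟩ := hS
    refine ⟨fun t _ => if t ∈ A then 1 else 0, {q : ℕ → ℕ | q 0 = 1} ×ˢ B,
      measurable_pi_lambda _ fun _ => measurable_const.ite hA measurable_const,
      (measurable_pi_apply 0 (measurableSet_singleton 1)).prod hB, ?_⟩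
    ext ⟨t, x⟩
    by_cases ht : t ∈ A <;> simp [ht]
  | empty => exact ⟨fun _ _ => 0, ∅, measurable_const, .empty, rfl⟩
  | compl _ _ ih =>
    obtain ⟨h, S₀, hh, hS₀, rfl⟩ := ih
    exact ⟨h, S₀ᶜ, hh, hS₀.compl, rfl⟩
  | iUnion S _ ih =>
    choose h S₀ hh hS₀ hS using ih
    let H : T → ℕ → ℕ := fun t k => h k.unpair.1 t k.unpair.2
    let slice : ℕ → (ℕ → ℕ) → ℕ → ℕ := fun n q m => q (Nat.pair n m)
    have hslice : ∀ n t, slice n (H t) = h n t := fun n t => by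
      funext m
      simp [slice, H, Nat.unpair_pair]
    refine ⟨H, ⋃ n, Prod.map (slice n) id ⁻¹' S₀ n,
      measurable_pi_lambda _ fun k => (measurable_pi_apply _).comp (hh _),
      .iUnion fun n => (measurable_pi_lambda _ (fun m => measurable_pi_apply _)).prodMap
        measurable_id (hS₀ n), ?_⟩
    simp only [preimage_iUnion, hS]
    refine iUnion_congr fun n => ?_
    ext ⟨t, x⟩
    simp [hslice]

def prefixBox (n : ℕ → ℕ) (m : ℕ) : Set (ℕ → ℕ) := {z | ∀ i < m, z i ≤ n i}

theorem prefixBox_zero (n : ℕ → ℕ) : prefixBox n 0 = univ := by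
  simp [prefixBox]

theorem prefixBox_congr {n n' : ℕ → ℕ} {m : ℕ} (h : ∀ i < m, n i = n' i) :
    prefixBox n m = prefixBox n' m := by
  ext z
  exact forall₂_congr fun i hi => by rw [h i hi]

theorem antitone_prefixBox (n : ℕ → ℕ) : Antitone (prefixBox n) :=
  fun _ _ hm _ hz i hi => hz i (hi.trans_le hm)

theorem monotone_prefixBox_update (n : ℕ → ℕ) (m : ℕ) :
    Monotone fun k => prefixBox (update n m k) (m + 1) := by
  intro k k' hk z hz i hi
  rcases Nat.lt_succ_iff_lt_or_eq.1 hi with hi | rfl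
  · simpa [hi.ne] using hz i (Nat.lt_succ_of_lt hi)
  · simpa using (by simpa using hz i hi : z i ≤ k).trans hk

theorem iUnion_prefixBox_update (n : ℕ → ℕ) (m : ℕ) :
    ⋃ k, prefixBox (update n m k) (m + 1) = prefixBox n m := by
  refine subset_antisymm (iUnion_subset fun k z hz i hi => ?_) fun z hz => ?_
  · simpa [hi.ne] using hz i (Nat.lt_succ_of_lt hi)
  · refine mem_iUnion.2 ⟨z m, fun i hi => ?_⟩
    rcases Nat.lt_succ_iff_lt_or_eq.1 hi with hi | rfl
    · simpa [hi.ne] using hz i hi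
    · simp

theorem isCompact_Iic_pi_nat {ι : Type*} (n : ι → ℕ) : IsCompact (Iic n) := by
  rw [← pi_univ_Iic]
  exact isCompact_univ_pi fun i => (finite_Iic (n i)).isCompact

theorem iInter_closure_image_prefixBox_subset {Y : Type*} [TopologicalSpace Y] [T2Space Y]
    [FirstCountableTopology Y] {φ : (ℕ → ℕ) → Y} (hφ : Continuous φ) (n : ℕ → ℕ) :
    ⋂ m, closure (φ '' prefixBox n m) ⊆ φ '' Iic n := by
  intro p hp
  obtain ⟨U, hU⟩ := (𝓝 p).exists_antitone_basis
  have : ∀ m, ∃ z ∈ prefixBox n m, φ z ∈ U m := fun m => by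
    obtain ⟨_, hzU, z, hz, rfl⟩ := mem_closure_iff_nhds.1 (mem_iInter.1 hp m) (U m) (hU.mem m)
    exact ⟨z, hz, hzU⟩
  choose z hz hzU using this
  -- clipping `z m` at `n` only changes coordinates `≥ m`
  obtain ⟨a, ha, ρ, hρ, hlim⟩ :=
    (isCompact_Iic_pi_nat n).tendsto_subseq (x := fun m => z m ⊓ n)
      fun m => (inf_le_right : z m ⊓ n ≤ n)
  have hza : Tendsto (z ∘ ρ) atTop (𝓝 a) := by
    refine tendsto_pi_nhds.2 fun i => (((continuous_apply i).tendsto a).comp hlim).congr' ?_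
    filter_upwards [eventually_gt_atTop i] with k hk
    exact min_eq_left (hz _ i (hk.trans_le hρ.le_apply))
  exact ⟨a, ha, tendsto_nhds_unique ((hφ.tendsto a).comp hza)
    ((hU.tendsto hzU).comp hρ.tendsto_atTop)⟩

theorem Monotone.exists_measure_iUnion_le_add {α : Type*} [MeasurableSpace α] {μ : Measure α}
    {s : ℕ → Set α} (hs : Monotone s) (hμ : μ (⋃ k, s k) ≠ ∞) {δ : ℝ≥0∞} (hδ : δ ≠ 0) :
    ∃ k, μ (⋃ k, s k) ≤ μ (s k) + δ :=
  (((tendsto_measure_iUnion_atTop hs).add_const δ).eventually_const_lt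
    (ENNReal.lt_add_right hμ hδ)).exists.imp fun _ => le_of_lt

theorem exists_forall_measure_range_le_image_prefixBox_add {Y : Type*} [MeasurableSpace Y]
    (ν : Measure Y) [IsFiniteMeasure ν] (φ : (ℕ → ℕ) → Y) {ε : ℝ≥0∞} (hε : ε ≠ 0) :
    ∃ n, ∀ m, ν (range φ) ≤ ν (φ '' prefixBox n m) + ε := by
  obtain ⟨δ, hδ, hδε⟩ := ENNReal.exists_pos_sum_of_countable' hε ℕ
  have hsplit : ∀ m n, ∃ k,
      ν (φ '' prefixBox n m) ≤ ν (φ '' prefixBox (update n m k) (m + 1)) + δ m := fun m n => by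
    simpa only [← image_iUnion, iUnion_prefixBox_update] using
      Monotone.exists_measure_iUnion_le_add (fun _ _ hk => image_mono
        (monotone_prefixBox_update n m hk)) (measure_ne_top ν _) (hδ m).ne'
  -- choose the bounds one coordinate at a time, losing at most `δ m` at step `m`
  let P m x k := ν (φ '' prefixBox x m) ≤ ν (φ '' prefixBox (update x m k) (m + 1)) + δ m
  let n := greedySeq P
  have hstep : ∀ m, ν (φ '' prefixBox n m) ≤ ν (φ '' prefixBox n (m + 1)) + δ m := fun m => by
    simpa [P] using greedySeq_spec (P := P) (fun m x y hxy => funext fun k => by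
      simp only [P, prefixBox_congr hxy, prefixBox_congr (forall_lt_succ_update_eq hxy k)])
      (hsplit m n)
  have hsum : ∀ m, ν (range φ) ≤ ν (φ '' prefixBox n m) + ∑ i ∈ Finset.range m, δ i := by
    intro m
    induction m with
    | zero => simp [prefixBox_zero]
    | succ m ih =>
      calc ν (range φ) ≤ ν (φ '' prefixBox n (m + 1)) + δ m + ∑ i ∈ Finset.range m, δ i :=
            ih.trans (by gcongr; exact hstep m)
        _ = ν (φ '' prefixBox n (m + 1)) + ∑ i ∈ Finset.range (m + 1), δ i := by
            rw [Finset.sum_range_succ]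
            ring
  exact ⟨n, fun m => (hsum m).trans (by gcongr; exact (ENNReal.sum_le_tsum _).trans hδε.le)⟩

theorem exists_measure_range_le_image_Iic_add {Y : Type*} [TopologicalSpace Y] [T2Space Y]
    [FirstCountableTopology Y] [MeasurableSpace Y] [OpensMeasurableSpace Y]
    (ν : Measure Y) [IsFiniteMeasure ν] {φ : (ℕ → ℕ) → Y} (hφ : Continuous φ)
    {ε : ℝ≥0∞} (hε : ε ≠ 0) : ∃ n, ν (range φ) ≤ ν (φ '' Iic n) + ε := by
  obtain ⟨n, hn⟩ := exists_forall_measure_range_le_image_prefixBox_add ν φ hε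
  have hanti : Antitone fun m => closure (φ '' prefixBox n m) :=
    fun _ _ hm => closure_mono (image_mono (antitone_prefixBox n hm))
  refine ⟨n, ?_⟩
  calc ν (range φ) ≤ (⨅ m, ν (closure (φ '' prefixBox n m))) + ε := by
        rw [ENNReal.iInf_add]
        exact le_iInf fun m => (hn m).trans (by gcongr; exact subset_closure)
    _ = ν (⋂ m, closure (φ '' prefixBox n m)) + ε := by
        rw [hanti.measure_iInter (fun _ => isClosed_closure.measurableSet.nullMeasurableSet)
          ⟨0, measure_ne_top ν _⟩]
    _ ≤ ν (φ '' Iic n) + ε := by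
        gcongr
        exact iInter_closure_image_prefixBox_subset hφ n

theorem nullMeasurableSet_range_of_continuous {Y : Type*} [TopologicalSpace Y] [T2Space Y]
    [FirstCountableTopology Y] [MeasurableSpace Y] [OpensMeasurableSpace Y]
    (ν : Measure Y) [IsFiniteMeasure ν] {φ : (ℕ → ℕ) → Y} (hφ : Continuous φ) :
    NullMeasurableSet (range φ) ν := by
  choose n hn using fun j : ℕ => exists_measure_range_le_image_Iic_add ν hφ
    (ENNReal.inv_ne_zero.2 (ENNReal.natCast_ne_top j))
  let M := ⋃ j, φ '' Iic (n j)
  have hM : MeasurableSet M :=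
    .iUnion fun j => ((isCompact_Iic_pi_nat (n j)).image hφ).isClosed.measurableSet
  have hle : ν (range φ) ≤ ν M := by
    refine ENNReal.le_of_forall_pos_le_add fun δ hδ _ => ?_
    obtain ⟨j, hj⟩ := ENNReal.exists_inv_nat_lt (ENNReal.coe_ne_zero.2 hδ.ne')
    exact (hn j).trans (add_le_add (measure_mono (subset_iUnion (fun j => φ '' Iic (n j)) j)) hj.le)
  exact hM.nullMeasurableSet.congr (ae_eq_of_subset_of_measure_ge
    (iUnion_subset fun j => image_subset_range _ _) hle hM.nullMeasurableSet (measure_ne_top ν _))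

theorem MeasureTheory.AnalyticSet.nullMeasurableSet {Y : Type*} [TopologicalSpace Y] [T2Space Y]
    [FirstCountableTopology Y] [MeasurableSpace Y] [OpensMeasurableSpace Y] {A : Set Y}
    (hA : AnalyticSet A) (ν : Measure Y) [IsFiniteMeasure ν] : NullMeasurableSet A ν := by
  rw [AnalyticSet] at hA
  obtain rfl | ⟨φ, hφ, rfl⟩ := hA
  · exact .empty
  · exact nullMeasurableSet_range_of_continuous ν hφ

theorem MeasureTheory.AnalyticSet.measurableSet_preimage {T Y : Type*} [MeasurableSpace T]
    [TopologicalSpace Y] [T2Space Y] [FirstCountableTopology Y] [MeasurableSpace Y]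
    [OpensMeasurableSpace Y] {A : Set Y} (hA : AnalyticSet A) (μ : Measure T)
    [IsFiniteMeasure μ] [μ.IsComplete] {g : T → Y} (hg : Measurable g) :
    MeasurableSet (g ⁻¹' A) :=
  ((hA.nullMeasurableSet (μ.map g)).preimage (hg.quasiMeasurePreserving μ)).measurable_of_complete

noncomputable def leftmostPreimage {Y : Type*} (φ : (ℕ → ℕ) → Y) (p : Y) : ℕ → ℕ :=
  greedySeq fun m x k => p ∈ φ '' PiNat.cylinder (update x m k) (m + 1)

theorem apply_leftmostPreimage {Y : Type*} [TopologicalSpace Y] [T1Space Y]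
    {φ : (ℕ → ℕ) → Y} (hφ : Continuous φ) {p : Y} (hp : p ∈ range φ) :
    φ (leftmostPreimage φ p) = p := by
  set σ := leftmostPreimage φ p
  have hmem : ∀ m, p ∈ φ '' PiNat.cylinder σ m := by
    intro m
    induction m with
    | zero => simpa [PiNat.cylinder_zero] using hp
    | succ m ih =>
      rw [← PiNat.iUnion_cylinder_update, image_iUnion, mem_iUnion] at ih
      have := greedySeq_spec
        (P := fun m x k => p ∈ φ '' PiNat.cylinder (update x m k) (m + 1))
        (fun m x y hxy => funext fun k => by
          rw [PiNat.mem_cylinder_iff_eq.1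
            (PiNat.mem_cylinder_iff.2 (forall_lt_succ_update_eq hxy k))]) ih
      simp only [update_eq_self] at this
      exact this
  choose z hz hφz using hmem
  have hlim : Tendsto z atTop (𝓝 σ) := tendsto_pi_nhds.2 fun i =>
    tendsto_const_nhds.congr' ((eventually_gt_atTop i).mono fun m hm => (hz m i hm).symm)
  have := (hφ.tendsto σ).comp hlim
  simp only [comp_def, hφz] at this
  exact (tendsto_const_nhds_iff.1 this).symm

theorem measurable_leftmostPreimage_comp {T Y : Type*} [MeasurableSpace T]
    {φ : (ℕ → ℕ) → Y} {g : T → Y}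
    (hg : ∀ x m, MeasurableSet (g ⁻¹' (φ '' PiNat.cylinder x m))) :
    Measurable fun t => leftmostPreimage φ (g t) :=
  measurable_greedySeq fun _ _ _ => hg _ _

theorem exists_measurable_selection_s17 {T X : Type*} [MeasurableSpace T] [TopologicalSpace X]
    [PolishSpace X] [MeasurableSpace X] [BorelSpace X] (μ : Measure T) [IsFiniteMeasure μ]
    [μ.IsComplete] (F : T → Set X) (hF : ∀ t, (F t).Nonempty)
    (hgraph : MeasurableSet {q : T × X | q.2 ∈ F q.1}) :
    ∃ f : T → X, Measurable f ∧ ∀ t, f t ∈ F t := by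
  obtain ⟨h, S₀, hh, hS₀, hS⟩ := hgraph.exists_eq_prodMap_preimage
  have hmem : ∀ t x, x ∈ F t ↔ (h t, x) ∈ S₀ := fun t x => Set.ext_iff.1 hS (t, x)
  have hS₀an := hS₀.analyticSet
  rw [AnalyticSet] at hS₀an
  obtain rfl | ⟨ψ, hψ, rfl⟩ := hS₀an
  · have : IsEmpty T := ⟨fun t => (hF t).elim fun x hx => (hmem t x).1 hx⟩
    exact ⟨isEmptyElim, measurable_of_empty _, isEmptyElim⟩
  have hrange : ∀ t, h t ∈ range (Prod.fst ∘ ψ) := fun t => by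
    obtain ⟨x, hx⟩ := hF t
    obtain ⟨z, hz⟩ := (hmem t x).1 hx
    exact ⟨z, congrArg Prod.fst hz⟩
  let σ t := leftmostPreimage (Prod.fst ∘ ψ) (h t)
  have hσ : Measurable σ := measurable_leftmostPreimage_comp fun x m =>
    ((PiNat.isOpen_cylinder (E := fun _ => ℕ) x m).analyticSet_image hψ.fst).measurableSet_preimage
      μ hh
  refine ⟨fun t => (ψ (σ t)).2, hψ.snd.measurable.comp hσ, fun t => ?_⟩
  rw [hmem, ← apply_leftmostPreimage hψ.fst (hrange t)]
  exact mem_range_self _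

theorem aumann_saint_beuve_selection_general {ℓ : ℕ} {T : Type*} [MeasurableSpace T]
    (μ : Measure T) [IsFiniteMeasure μ] (hcompl : μ.IsComplete)
    (F : T → Set (Fin ℓ → ℝ)) (hFne : ∀ t, (F t).Nonempty)
    (hgraph : MeasurableSet {q : T × (Fin ℓ → ℝ) | q.2 ∈ F q.1}) :
    ∃ f : T → Fin ℓ → ℝ, Measurable f ∧ ∀ t, f t ∈ F t :=
  have := hcompl
  exists_measurable_selection_s17 μ F hFne hgraph

/-- Aumann–Saint-Beuve measurable selection theorem (finite-dimensional form): a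
nonempty-valued correspondence into a Borel subset `B ⊆ ℝ^ℓ` with measurable graph over
a complete finite measure space admits a measurable selection. -/
theorem aumann_saint_beuve_selection {ℓ : ℕ} {T : Type*} [MeasurableSpace T]
    (μ : Measure T) [IsFiniteMeasure μ] (hcompl : μ.IsComplete)
    (B : Set (Fin ℓ → ℝ)) (hB : MeasurableSet B)
    (F : T → Set (Fin ℓ → ℝ)) (hFB : ∀ t, F t ⊆ B) (hFne : ∀ t, (F t).Nonempty)
    (hgraph : MeasurableSet {q : T × (Fin ℓ → ℝ) | q.2 ∈ F q.1}) :
    ∃ f : T → Fin ℓ → ℝ, Measurable f ∧ ∀ t, f t ∈ F t :=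
  aumann_saint_beuve_selection_general μ hcompl F hFne hgraph
end
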